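/- Let K be a convex body in ℝⁿ containing the unit ball B₂ⁿ. Then for all 0 < t ≤ 1 the set {x ∈ ∂K : r_K(x) ≥ t} is closed and satisfies (1-t)^{n-1} vol_{n-1}(∂K) ≤ H_{n-1}({x ∈ ∂K : r_K(x) ≥ t}), where H_{n-1} is the (n-1)-dimensional Hausdorff measure. -/

import Mathlib

open MeasureTheory RealInnerProductSpace Classical

/-- The outer unit normal of `K` at `x`, when it exists uniquely; `0` otherwise. -/
noncomputable def outerNormalAt {n : ℕ} (K : Set (EuclideanSpace ℝ (Fin n)))
    (x : EuclideanSpace ℝ (Fin n)) : EuclideanSpace ℝ (Fin n) :=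
  if h : ∃! u : EuclideanSpace ℝ (Fin n), ‖u‖ = 1 ∧ ∀ y ∈ K, ⟪y - x, u⟫ ≤ 0 then
    h.choose
  else 0

/-- The rolling function `r_K(x)`: the radius of the largest Euclidean ball contained in
`K` touching `∂K` at `x` (and `0` if the outer normal at `x` is not unique). -/
noncomputable def rollingRadius {n : ℕ} (K : Set (EuclideanSpace ℝ (Fin n)))
    (x : EuclideanSpace ℝ (Fin n)) : ℝ :=
  sSup {ρ : ℝ | 0 ≤ ρ ∧ Metric.closedBall (x - ρ • outerNormalAt K x) ρ ⊆ K}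

open Metric
open scoped Pointwise

/-!
Put `C = (1 - t) • K`. By convexity `closedBall y t ⊆ K` for every `y ∈ C`. Given `y ∈ ∂C` with an
outer unit normal `v`, push the ball `closedBall y t` in direction `v` as far as it stays in `K`;
it then touches `∂K` at some `z`, so `t ≤ r_K(z)` and `z - t • N_K(z) = y + s • v`, a point whose
metric projection onto `C` is `y`. Hence `z ↦ proj_C (z - t • N_K(z))` maps the superlevel set onto
a superset of `∂C`. This map is `1`-Lipschitz: the projection is, and so is `z ↦ z - t • N_K(z)`,
because testing the support inequality at `z₁` against the point `z₂ - t • N₂ + t • N₁` of the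
rolling ball at `z₂`, and symmetrically, gives `t ‖N₁ - N₂‖² ≤ ⟪z₁ - z₂, N₁ - N₂⟫`. Therefore
`(1 - t)^(n-1) H^(n-1)(∂K) = H^(n-1)(∂C)` is at most the measure of the superlevel set.

For `t = 1` the set `C` is a point, but then the bound has content only in dimension one, where
every boundary point carries a rolling ball of radius `1`.

Closedness: the superlevel set is the image in `∂K` of the closed set of pairs `(z, u)`, with `u`
in the compact unit sphere, such that `closedBall (z - t • u) t ⊆ K`.
-/

section NormedSpace
variable {X E : Type*} [TopologicalSpace X] [NormedAddCommGroup E] [NormedSpace ℝ E]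

lemma add_smul_mem_closedBall {c w : E} {t : ℝ} (hw : ‖w‖ = 1) (ht : 0 ≤ t) :
    c + t • w ∈ closedBall c t := by
  rw [mem_closedBall, dist_self_add_left, norm_smul, hw, mul_one, Real.norm_of_nonneg ht]

lemma isClosed_setOf_closedBall_subset {K : Set E} (hK : IsClosed K) {c : X → E} {r : X → ℝ}
    (hc : Continuous c) (hr : Continuous r) :
    IsClosed {p | 0 ≤ r p ∧ closedBall (c p) (r p) ⊆ K} := by
  have : {p | 0 ≤ r p ∧ closedBall (c p) (r p) ⊆ K} =
      {p | 0 ≤ r p} ∩ ⋂ w ∈ closedBall (0 : E) 1, {p | c p + r p • w ∈ K} := by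
    ext p
    simp only [Set.mem_ofPred_eq, Set.mem_inter_iff, Set.mem_iInter]
    refine and_congr_right fun hp => ?_
    rw [← affinity_unitClosedBall hp, ← Set.image_smul, ← Set.image_vadd, Set.image_image,
      Set.image_subset_iff]
    rfl
  rw [this]
  exact (isClosed_le continuous_const hr).inter <| isClosed_biInter fun w _ =>
    hK.preimage (hc.add (hr.smul continuous_const))

lemma bddAbove_setOf_closedBall_subset [Nontrivial E] {K : Set E} (hK : Bornology.IsBounded K)
    (c : ℝ → E) : BddAbove {r | 0 ≤ r ∧ closedBall (c r) r ⊆ K} := by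
  obtain ⟨e, he⟩ := exists_norm_eq E zero_le_one
  refine ⟨diam K / 2, ?_⟩
  rintro r ⟨hr, hball⟩
  have hmem : ∀ s : ℝ, |s| ≤ 1 → c r + (s * r) • e ∈ K := fun s hs => hball <| by
    rw [mem_closedBall, dist_self_add_left, norm_smul, he, mul_one, norm_mul,
      Real.norm_of_nonneg hr, Real.norm_eq_abs]
    exact mul_le_of_le_one_left hr hs
  have := dist_le_diam_of_mem hK (hmem 1 (by simp)) (hmem (-1) (by simp))
  rw [dist_add_left, dist_eq_norm, ← sub_smul, norm_smul, he, mul_one,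
    Real.norm_of_nonneg (by linarith)] at this
  linarith

lemma closedBall_subset_of_mem_smul {K : Set E} (hconv : Convex ℝ K)
    (hball : closedBall (0 : E) 1 ⊆ K) {t : ℝ} (ht0 : 0 ≤ t) (ht1 : t ≤ 1) {y : E}
    (hy : y ∈ (1 - t) • K) : closedBall y t ⊆ K := by
  rw [← affinity_unitClosedBall ht0]
  rintro _ ⟨w, hw, rfl⟩
  exact hconv.set_combo_subset (sub_nonneg.2 ht1) ht0 (sub_add_cancel 1 t)
    (Set.add_mem_add hy (Set.smul_set_mono hball hw))

lemma exists_closedBall_add_smul_subset_touching {K : Set E} (hK : IsCompact K) {y v : E}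
    {t : ℝ} (ht : 0 ≤ t) (hv : ‖v‖ = 1) (hy : closedBall y t ⊆ K) :
    ∃ s : ℝ, 0 ≤ s ∧ closedBall (y + s • v) t ⊆ K ∧
      ∃ z ∈ frontier K, dist z (y + s • v) = t := by
  set S := {s : ℝ | 0 ≤ s ∧ closedBall (y + s • v) t ⊆ K}
  have hyK : y ∈ K := hy (mem_closedBall_self ht)
  have hS0 : (0 : ℝ) ∈ S := ⟨le_rfl, by simpa using hy⟩
  have hSclosed : IsClosed S := by
    convert (isClosed_Ici (a := (0 : ℝ))).inter (isClosed_setOf_closedBall_subset hK.isClosed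
      (c := fun s : ℝ => y + s • v) (r := fun _ => t) (by fun_prop) continuous_const) using 1
    simp [S, ht, Set.ext_iff]
  have hSbdd : BddAbove S := ⟨diam K, fun s ⟨hs, hsK⟩ => by
    simpa [norm_smul, hv, abs_of_nonneg hs] using
      dist_le_diam_of_mem hK.isBounded (hsK (mem_closedBall_self ht)) hyK⟩
  obtain ⟨hs0, hsK⟩ : sSup S ∈ S := hSclosed.csSup_mem ⟨0, hS0⟩ hSbdd
  refine ⟨sSup S, hs0, hsK, ?_⟩
  by_contra! hfar
  set c := y + sSup S • v
  have hint : closedBall c t ⊆ interior K := by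
    intro x hx
    by_contra hxi
    have hlt : dist x c < t :=
      (mem_closedBall.1 hx).lt_of_ne (hfar x ⟨subset_closure (hsK hx), hxi⟩)
    exact hxi (interior_maximal (ball_subset_closedBall.trans hsK) isOpen_ball hlt)
  obtain ⟨ε, hε, hthick⟩ := (hK.of_isClosed_subset isClosed_closedBall hsK)
    |>.exists_thickening_subset_open isOpen_interior hint
  have hmore : sSup S + ε / 2 ∈ S := by
    refine ⟨by linarith, fun x hx => interior_subset (hthick ?_)⟩
    rw [thickening_closedBall hε ht]
    refine closedBall_subset_ball' ?_ (by rwa [add_smul, ← add_assoc] at hx)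
    rw [dist_self_add_left, norm_smul, hv, mul_one, Real.norm_of_nonneg (by positivity)]
    linarith
  linarith [le_csSup hSbdd hmore]

lemma sub_two_smul_normalize_mem {K : Set E} (hconv : Convex ℝ K)
    (hball : closedBall (0 : E) 1 ⊆ K) {z : E} (hz : z ∈ K) (hz1 : 1 ≤ ‖z‖) :
    z - (2 : ℝ) • ‖z‖⁻¹ • z ∈ K := by
  have hzpos : 0 < ‖z‖ := by linarith
  rw [smul_smul, show z - (2 * ‖z‖⁻¹) • z = (1 - 2 * ‖z‖⁻¹) • z by rw [sub_smul, one_smul]]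
  by_cases h2 : 2 ≤ ‖z‖
  · refine hconv.smul_mem_of_zero_mem (hball (mem_closedBall_self zero_le_one)) hz ⟨?_, ?_⟩
    · rw [sub_nonneg, ← div_eq_mul_inv, div_le_one hzpos]; exact h2
    · have : 0 ≤ 2 * ‖z‖⁻¹ := by positivity
      linarith
  · refine hball (mem_closedBall_zero_iff.2 ?_)
    rw [norm_smul, Real.norm_eq_abs, abs_of_nonpos, neg_sub, sub_mul, mul_assoc,
      inv_mul_cancel₀ hzpos.ne']
    · linarith
    · rw [sub_nonpos, ← div_eq_mul_inv, le_div_iff₀ hzpos]; linarith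

lemma closedBall_sub_normalize_subset (hE : Module.finrank ℝ E = 1) {K : Set E}
    (hconv : Convex ℝ K) (hball : closedBall (0 : E) 1 ⊆ K) {z : E} (hz : z ∈ K)
    (hz1 : 1 ≤ ‖z‖) : closedBall (z - ‖z‖⁻¹ • z) 1 ⊆ K := by
  set u := ‖z‖⁻¹ • z
  have hu : ‖u‖ = 1 := norm_smul_inv_norm (norm_pos_iff.1 (by linarith))
  have hfar : z - (2 : ℝ) • u ∈ K := sub_two_smul_normalize_mem hconv hball hz hz1
  intro x hx
  obtain ⟨a, ha⟩ := (finrank_eq_one_iff_of_nonzero' u (norm_ne_zero_iff.1 (by simp [hu]))).1 hE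
    (x - (z - u))
  rw [mem_closedBall, dist_eq_norm, ← ha, norm_smul, hu, mul_one, Real.norm_eq_abs] at hx
  have hx' : x = z - (2 : ℝ) • u + ((1 + a) / 2) • ((2 : ℝ) • u) := by
    rw [sub_eq_iff_eq_add.1 ha.symm]; module
  rw [hx']
  exact hconv.add_smul_mem hfar (by rwa [sub_add_cancel])
    ⟨by linarith [neg_abs_le a], by linarith [le_abs_self a]⟩

lemma frontier_smul_of_ne_zero {c : ℝ} (hc : c ≠ 0) (s : Set E) :
    frontier (c • s) = c • frontier s :=
  ((Homeomorph.smulOfNeZero c hc).image_frontier s).symm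

lemma hausdorffMeasure_frontier_smul [MeasurableSpace E] [BorelSpace E] {c d : ℝ} (hc : 0 < c)
    (hd : 0 ≤ d) (s : Set E) :
    μH[d] (frontier (c • s)) = ENNReal.ofReal (c ^ d) * μH[d] (frontier s) := by
  rw [frontier_smul_of_ne_zero hc.ne', Measure.hausdorffMeasure_smul₀ hd hc.ne', ENNReal.smul_def,
    smul_eq_mul, ← ENNReal.ofReal_rpow_of_nonneg hc.le hd, ENNReal.coe_rpow_of_nonneg _ hd,
    ← Real.enorm_of_nonneg hc.le]
  rfl

end NormedSpace

section InnerProductSpace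
variable {F : Type*} [NormedAddCommGroup F] [InnerProductSpace ℝ F]

lemma norm_sub_le_norm_sub_of_inner_nonpos {x₁ x₂ p₁ p₂ : F}
    (h₁ : ⟪x₁ - p₁, p₂ - p₁⟫ ≤ 0) (h₂ : ⟪x₂ - p₂, p₁ - p₂⟫ ≤ 0) :
    ‖p₁ - p₂‖ ≤ ‖x₁ - x₂‖ := by
  have key : ‖p₁ - p₂‖ ^ 2 ≤ ⟪x₁ - x₂, p₁ - p₂⟫ := by
    rw [← real_inner_self_eq_norm_sq]
    simp only [inner_sub_left, inner_sub_right] at h₁ h₂ ⊢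
    linarith [real_inner_comm p₂ p₁, real_inner_comm x₁ p₁, real_inner_comm x₂ p₂,
      real_inner_comm x₁ p₂, real_inner_comm x₂ p₁]
  nlinarith [real_inner_le_norm (x₁ - x₂) (p₁ - p₂), norm_nonneg (p₁ - p₂),
    norm_nonneg (x₁ - x₂)]

section Projection
variable {C : Set F} {P : F → F}

lemma lipschitzWith_one_of_forall_inner_sub_nonpos (hPC : ∀ x, P x ∈ C)
    (hP : ∀ x, ∀ w ∈ C, ⟪x - P x, w - P x⟫ ≤ 0) : LipschitzWith 1 P :=
  LipschitzWith.of_dist_le_mul fun x₁ x₂ => by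
    simpa [dist_eq_norm] using
      norm_sub_le_norm_sub_of_inner_nonpos (hP x₁ _ (hPC x₂)) (hP x₂ _ (hPC x₁))

lemma apply_eq_of_forall_inner_sub_nonpos (hPC : ∀ x, P x ∈ C)
    (hP : ∀ x, ∀ w ∈ C, ⟪x - P x, w - P x⟫ ≤ 0) {x y : F} (hy : y ∈ C) (hxy : ∀ w ∈ C, ⟪x - y, w - y⟫ ≤ 0) : P x = y := by
  simpa [sub_eq_zero] using norm_sub_le_norm_sub_of_inner_nonpos (hP x y hy) (hxy _ (hPC x))

lemma exists_forall_inner_sub_nonpos [CompleteSpace F] (hC : IsClosed C) (hconv : Convex ℝ C)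
    (hne : C.Nonempty) : ∃ P : F → F, (∀ x, P x ∈ C) ∧ ∀ x, ∀ w ∈ C, ⟪x - P x, w - P x⟫ ≤ 0 := by
  choose P hPC hP using fun x =>
    exists_norm_eq_iInf_of_complete_convex hne hC.isComplete hconv x
  exact ⟨P, hPC, fun x => (norm_eq_iInf_iff_real_inner_le_zero hconv (hPC x)).1 (hP x)⟩

end Projection

lemma norm_sub_smul_sub_sub_smul_le {z₁ z₂ u₁ u₂ : F} {t : ℝ} (ht : 0 ≤ t)
    (h : t * ‖u₁ - u₂‖ ^ 2 ≤ ⟪z₁ - z₂, u₁ - u₂⟫) :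
    ‖(z₁ - t • u₁) - (z₂ - t • u₂)‖ ≤ ‖z₁ - z₂‖ := by
  have hsq : ‖(z₁ - t • u₁) - (z₂ - t • u₂)‖ ^ 2
      = ‖z₁ - z₂‖ ^ 2 - 2 * t * ⟪z₁ - z₂, u₁ - u₂⟫ + t ^ 2 * ‖u₁ - u₂‖ ^ 2 := by
    rw [show (z₁ - t • u₁) - (z₂ - t • u₂) = (z₁ - z₂) - t • (u₁ - u₂) by module,
      norm_sub_sq_real, norm_smul, real_inner_smul_right, Real.norm_of_nonneg ht]
    ring
  refine (sq_le_sq₀ (norm_nonneg _) (norm_nonneg _)).1 ?_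
  nlinarith [mul_le_mul_of_nonneg_left h ht, sq_nonneg (t * ‖u₁ - u₂‖)]

lemma eq_of_closedBall_subset_of_inner_nonpos {K : Set F} {z u w : F} {t : ℝ} (ht : 0 < t)
    (hu : ‖u‖ = 1) (hw : ‖w‖ = 1) (hball : closedBall (z - t • u) t ⊆ K)
    (hsupp : ∀ y ∈ K, ⟪y - z, w⟫ ≤ 0) : w = u := by
  have h := hsupp _ (hball (add_smul_mem_closedBall hw ht.le))
  rw [show z - t • u + t • w - z = t • (w - u) by module, real_inner_smul_left, inner_sub_left,
    real_inner_self_eq_norm_sq, hw] at h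
  have hle : ⟪u, w⟫ ≤ 1 := by simpa [hu, hw] using real_inner_le_norm u w
  have : ⟪u, w⟫ = 1 := le_antisymm hle (by nlinarith [real_inner_comm u w])
  exact ((inner_eq_one_iff_of_norm_eq_one hu hw).1 this).symm

variable [CompleteSpace F]

lemma exists_norm_eq_one_inner_sub_nonpos {K : Set F} (hconv : Convex ℝ K)
    (hint : (interior K).Nonempty) {z : F} (hz : z ∉ interior K) :
    ∃ v : F, ‖v‖ = 1 ∧ ∀ y ∈ K, ⟪y - z, v⟫ ≤ 0 := by
  obtain ⟨f, c, hf0, hfK, hfz⟩ := geometric_hahn_banach_of_nonempty_interior hconv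
    (convex_singleton z) (Set.disjoint_singleton_right.2 hz) hint (Set.singleton_nonempty z)
  set w := (InnerProductSpace.toDual ℝ F).symm f
  have hw : w ≠ 0 := by simpa [w] using hf0
  refine ⟨‖w‖⁻¹ • w, norm_smul_inv_norm hw, fun y hy => ?_⟩
  rw [real_inner_smul_right, real_inner_comm, InnerProductSpace.toDual_symm_apply, map_sub]
  exact mul_nonpos_of_nonneg_of_nonpos (by positivity) (by linarith [hfK y hy, hfz z rfl])

lemma inner_sub_nonpos_of_closedBall_subset {K : Set F} (hconv : Convex ℝ K) {z u : F} {t : ℝ}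
    (hz : z ∉ interior K) (hu : ‖u‖ = 1) (ht : 0 < t) (hball : closedBall (z - t • u) t ⊆ K) :
    ∀ y ∈ K, ⟪y - z, u⟫ ≤ 0 := by
  have hint : (interior K).Nonempty :=
    ⟨z - t • u, interior_mono hball (by simpa [interior_closedBall _ ht.ne'] using ht)⟩
  obtain ⟨v, hv, hsupp⟩ := exists_norm_eq_one_inner_sub_nonpos hconv hint hz
  rwa [← eq_of_closedBall_subset_of_inner_nonpos ht hu hv hball hsupp]

end InnerProductSpace

section RollingRadius
variable {n : ℕ} {K : Set (EuclideanSpace ℝ (Fin n))} {z u : EuclideanSpace ℝ (Fin n)} {t : ℝ}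

local notation "ℝⁿ" => EuclideanSpace ℝ (Fin n)

lemma outerNormalAt_eq_of_closedBall_subset (hconv : Convex ℝ K) (hz : z ∉ interior K)
    (hu : ‖u‖ = 1) (ht : 0 < t) (hball : closedBall (z - t • u) t ⊆ K) :
    outerNormalAt K z = u := by
  have hsupp := inner_sub_nonpos_of_closedBall_subset hconv hz hu ht hball
  have hex : ∃! w : ℝⁿ, ‖w‖ = 1 ∧ ∀ y ∈ K, ⟪y - z, w⟫ ≤ 0 :=
    ⟨u, ⟨hu, hsupp⟩, fun w hw => eq_of_closedBall_subset_of_inner_nonpos ht hu hw.1 hball hw.2⟩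
  rw [outerNormalAt, dif_pos hex]
  exact hex.unique hex.choose_spec.1 ⟨hu, hsupp⟩

lemma norm_outerNormalAt_of_ne_zero (h : outerNormalAt K z ≠ 0) : ‖outerNormalAt K z‖ = 1 := by
  unfold outerNormalAt at h ⊢
  split_ifs at h ⊢ with hex
  · exact hex.choose_spec.1.1
  · exact absurd rfl h

lemma le_rollingRadius_of_closedBall_subset (hKb : Bornology.IsBounded K) (hconv : Convex ℝ K)
    (hz : z ∉ interior K) (hu : ‖u‖ = 1) (ht : 0 < t) (hball : closedBall (z - t • u) t ⊆ K) :
    t ≤ rollingRadius K z := by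
  have := nontrivial_of_ne u 0 (by simp [← norm_ne_zero_iff, hu])
  rw [rollingRadius, outerNormalAt_eq_of_closedBall_subset hconv hz hu ht hball]
  exact le_csSup (bddAbove_setOf_closedBall_subset hKb _) ⟨ht.le, hball⟩

lemma closedBall_subset_of_le_rollingRadius (hK : IsCompact K) (hz : z ∈ frontier K)
    (ht : 0 < t) (h : t ≤ rollingRadius K z) :
    ‖outerNormalAt K z‖ = 1 ∧ closedBall (z - t • outerNormalAt K z) t ⊆ K := by
  set N := outerNormalAt K z
  set S := {ρ : ℝ | 0 ≤ ρ ∧ closedBall (z - ρ • N) ρ ⊆ K}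
  have hN : ‖N‖ = 1 := by
    refine norm_outerNormalAt_of_ne_zero fun hN0 => ?_
    have : sSup S ≤ 0 := Real.sSup_nonpos fun ρ ⟨_, hρ⟩ => not_lt.1 fun hρ0 =>
      hz.2 <| interior_maximal (ball_subset_closedBall.trans (by simpa [N, hN0] using hρ))
        isOpen_ball (mem_ball_self hρ0)
    exact absurd (h.trans this) (not_le.2 ht)
  have := nontrivial_of_ne N 0 (by simp [← norm_ne_zero_iff, hN])
  have hS0 : (0 : ℝ) ∈ S := ⟨le_rfl, by simpa using hK.isClosed.frontier_subset hz⟩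
  have hSclosed : IsClosed S := isClosed_setOf_closedBall_subset hK.isClosed
    (c := fun ρ => z - ρ • N) (by fun_prop) continuous_id
  obtain ⟨-, hmax⟩ : rollingRadius K z ∈ S :=
    hSclosed.csSup_mem ⟨0, hS0⟩ (bddAbove_setOf_closedBall_subset hK.isBounded _)
  refine ⟨hN, (closedBall_subset_closedBall' ?_).trans hmax⟩
  rw [dist_sub_left, dist_eq_norm, ← sub_smul, norm_smul, hN, mul_one, Real.norm_eq_abs,
    abs_of_nonpos (by linarith)]
  linarith

lemma isClosed_setOf_mem_frontier_le_rollingRadius (hK : IsCompact K) (hconv : Convex ℝ K)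
    (ht : 0 < t) : IsClosed {z | z ∈ frontier K ∧ t ≤ rollingRadius K z} := by
  have hT : IsClosed
      {p : ℝⁿ × sphere (0 : ℝⁿ) 1 | 0 ≤ t ∧ closedBall (p.1 - t • (p.2 : ℝⁿ)) t ⊆ K} :=
    isClosed_setOf_closedBall_subset hK.isClosed (by fun_prop) continuous_const
  convert isClosed_frontier.inter (isClosedMap_fst_of_compactSpace _ hT) using 1
  ext z
  constructor
  · rintro ⟨hz, hzt⟩
    obtain ⟨hN, hball⟩ := closedBall_subset_of_le_rollingRadius hK hz ht hzt
    exact ⟨hz, (z, ⟨_, mem_sphere_zero_iff_norm.2 hN⟩), ⟨ht.le, hball⟩, rfl⟩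
  · rintro ⟨hz, ⟨_, u⟩, ⟨-, hball⟩, rfl⟩
    exact ⟨hz, le_rollingRadius_of_closedBall_subset hK.isBounded hconv hz.2
      (mem_sphere_zero_iff_norm.1 u.2) ht hball⟩

lemma lipschitzOnWith_sub_smul_outerNormalAt (hK : IsCompact K) (hconv : Convex ℝ K)
    (ht : 0 < t) : LipschitzOnWith 1 (fun z => z - t • outerNormalAt K z)
      {z | z ∈ frontier K ∧ t ≤ rollingRadius K z} := by
  refine LipschitzOnWith.of_dist_le_mul fun z₁ hz₁ z₂ hz₂ => ?_
  obtain ⟨hN₁, hball₁⟩ := closedBall_subset_of_le_rollingRadius hK hz₁.1 ht hz₁.2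
  obtain ⟨hN₂, hball₂⟩ := closedBall_subset_of_le_rollingRadius hK hz₂.1 ht hz₂.2
  set N₁ := outerNormalAt K z₁
  set N₂ := outerNormalAt K z₂
  have h₁ := inner_sub_nonpos_of_closedBall_subset hconv hz₁.1.2 hN₁ ht hball₁ _
    (hball₂ (add_smul_mem_closedBall hN₁ ht.le))
  have h₂ := inner_sub_nonpos_of_closedBall_subset hconv hz₂.1.2 hN₂ ht hball₂ _
    (hball₁ (add_smul_mem_closedBall hN₂ ht.le))
  rw [NNReal.coe_one, one_mul, dist_eq_norm, dist_eq_norm]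
  refine norm_sub_smul_sub_sub_smul_le ht.le ?_
  rw [← real_inner_self_eq_norm_sq]
  simp only [inner_sub_left, inner_sub_right, inner_add_left, real_inner_smul_left] at h₁ h₂ ⊢
  linarith [real_inner_comm N₁ N₂, real_inner_comm z₁ N₂, real_inner_comm z₂ N₁]

lemma frontier_smul_subset_image_sub_smul_outerNormalAt (hK : IsCompact K) (hconv : Convex ℝ K)
    (hball : closedBall (0 : ℝⁿ) 1 ⊆ K) (ht0 : 0 < t) (ht1 : t < 1) {P : ℝⁿ → ℝⁿ}
    (hPC : ∀ x, P x ∈ (1 - t) • K) (hP : ∀ x, ∀ w ∈ (1 - t) • K, ⟪x - P x, w - P x⟫ ≤ 0) :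
    frontier ((1 - t) • K) ⊆ (fun z => P (z - t • outerNormalAt K z)) ''
      {z | z ∈ frontier K ∧ t ≤ rollingRadius K z} := by
  intro y hy
  have hyC : y ∈ (1 - t) • K := (hK.smul _).isClosed.frontier_subset hy
  have hint : (interior ((1 - t) • K)).Nonempty := by
    have hsub := Set.smul_set_mono (a := 1 - t) hball
    rw [smul_unitClosedBall, Real.norm_of_nonneg (sub_pos.2 ht1).le] at hsub
    refine ⟨0, interior_mono hsub ?_⟩
    rw [interior_closedBall _ (sub_pos.2 ht1).ne']
    exact mem_ball_self (sub_pos.2 ht1)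
  obtain ⟨v, hv, hvC⟩ := exists_norm_eq_one_inner_sub_nonpos (hconv.smul _) hint hy.2
  obtain ⟨s, hs, hsK, z, hz, hzs⟩ := exists_closedBall_add_smul_subset_touching hK ht0.le hv
    (closedBall_subset_of_mem_smul hconv hball ht0.le ht1.le hyC)
  set u := t⁻¹ • (z - (y + s • v))
  have hu : ‖u‖ = 1 := by
    rw [norm_smul, ← dist_eq_norm, hzs, Real.norm_of_nonneg (inv_nonneg.2 ht0.le),
      inv_mul_cancel₀ ht0.ne']
  have hzu : z - t • u = y + s • v := by
    rw [smul_inv_smul₀ ht0.ne', sub_sub_cancel]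
  rw [← hzu] at hsK
  refine ⟨z, ⟨hz, le_rollingRadius_of_closedBall_subset hK.isBounded hconv hz.2 hu ht0 hsK⟩, ?_⟩
  show P (z - t • outerNormalAt K z) = y
  rw [outerNormalAt_eq_of_closedBall_subset hconv hz.2 hu ht0 hsK, hzu]
  refine apply_eq_of_forall_inner_sub_nonpos hPC hP hyC fun w hw => ?_
  rw [add_sub_cancel_left, real_inner_smul_left, real_inner_comm]
  exact mul_nonpos_of_nonneg_of_nonpos hs (hvC w hw)

lemma ofReal_rpow_mul_hausdorffMeasure_frontier_le (hK : IsCompact K) (hconv : Convex ℝ K)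
    (hball : closedBall (0 : ℝⁿ) 1 ⊆ K) (ht0 : 0 < t) (ht1 : t < 1) {d : ℝ} (hd : 0 ≤ d) :
    ENNReal.ofReal ((1 - t) ^ d) * μH[d] (frontier K) ≤
      μH[d] {z | z ∈ frontier K ∧ t ≤ rollingRadius K z} := by
  obtain ⟨P, hPC, hP⟩ := exists_forall_inner_sub_nonpos (hK.smul (1 - t)).isClosed
    (hconv.smul _) (Set.nonempty_of_mem (hball (mem_closedBall_self zero_le_one))).smul_set
  calc ENNReal.ofReal ((1 - t) ^ d) * μH[d] (frontier K) = μH[d] (frontier ((1 - t) • K)) :=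
        (hausdorffMeasure_frontier_smul (sub_pos.2 ht1) hd K).symm
    _ ≤ μH[d] ((fun z => P (z - t • outerNormalAt K z)) ''
          {z | z ∈ frontier K ∧ t ≤ rollingRadius K z}) :=
        measure_mono <|
          frontier_smul_subset_image_sub_smul_outerNormalAt hK hconv hball ht0 ht1 hPC hP
    _ ≤ μH[d] {z | z ∈ frontier K ∧ t ≤ rollingRadius K z} := by
        simpa using ((lipschitzWith_one_of_forall_inner_sub_nonpos hPC hP).comp_lipschitzOnWith
          (lipschitzOnWith_sub_smul_outerNormalAt hK hconv ht0)).hausdorffMeasure_image_le hd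

end RollingRadius

lemma one_le_rollingRadius_of_fin_one {K : Set (EuclideanSpace ℝ (Fin 1))} (hK : IsCompact K)
    (hconv : Convex ℝ K) (hball : closedBall (0 : EuclideanSpace ℝ (Fin 1)) 1 ⊆ K)
    {z : EuclideanSpace ℝ (Fin 1)} (hz : z ∈ frontier K) : 1 ≤ rollingRadius K z := by
  have hz1 : 1 ≤ ‖z‖ := not_lt.1 fun h => hz.2 <|
    interior_maximal (ball_subset_closedBall.trans hball) isOpen_ball (mem_ball_zero_iff.2 h)
  refine le_rollingRadius_of_closedBall_subset hK.isBounded hconv hz.2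
    (norm_smul_inv_norm (𝕜 := ℝ) (norm_pos_iff.1 (by linarith))) one_pos ?_
  rw [one_smul]
  exact closedBall_sub_normalize_subset finrank_euclideanSpace_fin hconv hball
    (hK.isClosed.frontier_subset hz) hz1

/-- For a convex body `K ⊆ ℝⁿ` containing the unit ball and `0 < t ≤ 1`, the set
`{x ∈ ∂K : r_K(x) ≥ t}` is closed and its `(n-1)`-dimensional Hausdorff measure is at
least `(1-t)^{n-1}` times the surface area of `K`. -/
theorem rollingRadius_superlevel_closed_and_measure
    (n : ℕ) (K : Set (EuclideanSpace ℝ (Fin n)))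
    (hK : IsCompact K) (hconv : Convex ℝ K)
    (hball : Metric.closedBall (0 : EuclideanSpace ℝ (Fin n)) 1 ⊆ K)
    (t : ℝ) (ht0 : 0 < t) (ht1 : t ≤ 1) :
    IsClosed {x | x ∈ frontier K ∧ t ≤ rollingRadius K x} ∧
    ENNReal.ofReal ((1 - t) ^ (n - 1)) * μH[(n : ℝ) - 1] (frontier K)
      ≤ μH[(n : ℝ) - 1] {x | x ∈ frontier K ∧ t ≤ rollingRadius K x} := by
  refine ⟨isClosed_setOf_mem_frontier_le_rollingRadius hK hconv ht0, ?_⟩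
  rcases Nat.eq_zero_or_pos n with rfl | hn
  · have hK : K = Set.univ := Set.eq_univ_of_forall fun x =>
      Subsingleton.elim (0 : EuclideanSpace ℝ (Fin 0)) x ▸ hball (mem_closedBall_self zero_le_one)
    simp [hK]
  rcases ht1.lt_or_eq with ht1 | rfl
  · rw [← Real.rpow_natCast, Nat.cast_pred hn]
    exact ofReal_rpow_mul_hausdorffMeasure_frontier_le hK hconv hball ht0 ht1
      (sub_nonneg.2 (Nat.one_le_cast.2 hn))
  rcases Nat.lt_or_eq_of_le hn with hn | rfl
  · simp [zero_pow (Nat.sub_ne_zero_of_lt hn)]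
  · have : frontier K ⊆ {x | x ∈ frontier K ∧ 1 ≤ rollingRadius K x} := fun z hz =>
      ⟨hz, one_le_rollingRadius_of_fin_one hK hconv hball hz⟩
    simpa using measure_mono this
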